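/- Let (g, B) be a finite-dimensional orthogonal Lie algebra over ℝ, h a finite-dimensional real Lie algebra, and ψ : h → End(g), z ↦ ψ_z, a Lie algebra homomorphism such that each ψ_z is a derivation of g skew-adjoint with respect to B. Define Φ(x,y)(w) = B(ψ_w(x), y) and π*_z(α) = −α ∘ ad_z, and define on the product space g̃ = h × g × h* the bracket ⁅(z,x,α),(z',y,β)⁆ = (⁅z,z'⁆, ψ_z(y) − ψ_{z'}(x) + ⁅x,y⁆, π*_z(β) − π*_{z'}(α) + Φ(x,y)). Then this bracket satisfies the Jacobi identity, making g̃ a Lie algebra, and the symmetric bilinear form μ̃₀((z,x,α),(z',y,β)) = B(x,y) + α(z') + β(z) is nondegenerate and invariant with respect to this bracket. Hence (g̃, μ̃₀) is an orthogonal Lie algebra, the double orthogonal extension of (g,B) by h via ψ. Moreover if B has signature (p,q) then μ̃₀ has signature (p + dim h, q + dim h). -/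

import Mathlib

attribute [local instance 100] LieRing.ofAssociativeRing

/-- A bilinear form `B` on a real vector space `V` has signature `(p,q)` (i.e. `p`
minuses and `q` pluses) if `V` splits as a direct sum of a `p`-dimensional
subspace on which `B` is negative definite and a `q`-dimensional subspace on
which `B` is positive definite, the two being `B`-orthogonal. -/
def HasSignature {V : Type*} [AddCommGroup V] [Module ℝ V]
    (B : V → V → ℝ) (p q : ℕ) : Prop :=
  ∃ N P : Submodule ℝ V,
    Module.finrank ℝ N = p ∧ Module.finrank ℝ P = q ∧
    IsCompl N P ∧
    (∀ x ∈ N, ∀ y ∈ P, B x y = 0) ∧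
    (∀ x ∈ N, x ≠ 0 → B x x < 0) ∧
    (∀ x ∈ P, x ≠ 0 → 0 < B x x)

/-- The cocycle `Φ(x,y) = B(ψ_•(x), y) ∈ h*` of the double orthogonal extension. -/
noncomputable def doubleExtPhi (g h : Type*) [LieRing g] [LieAlgebra ℝ g]
    [LieRing h] [LieAlgebra ℝ h] (B : LinearMap.BilinForm ℝ g)
    (ψ : h →ₗ⁅ℝ⁆ Module.End ℝ g) (x y : g) : Module.Dual ℝ h :=
  (B.flip y) ∘ₗ ((ψ : h →ₗ[ℝ] Module.End ℝ g).flip x)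

/-- The bracket of the double orthogonal extension `g̃ = h ⋉ (g ×_Φ h*)`:
`⁅(z,x,α),(z',y,β)⁆ = (⁅z,z'⁆, ψ_z(y) − ψ_{z'}(x) + ⁅x,y⁆,
π*_z(β) − π*_{z'}(α) + Φ(x,y))`. -/
noncomputable def doubleExtBracket (g h : Type*) [LieRing g] [LieAlgebra ℝ g]
    [LieRing h] [LieAlgebra ℝ h] (B : LinearMap.BilinForm ℝ g)
    (ψ : h →ₗ⁅ℝ⁆ Module.End ℝ g)
    (X Y : h × g × Module.Dual ℝ h) : h × g × Module.Dual ℝ h :=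
  (⁅X.1, Y.1⁆,
   ψ X.1 Y.2.1 - ψ Y.1 X.2.1 + ⁅X.2.1, Y.2.1⁆,
   -(Y.2.2 ∘ₗ (LieAlgebra.ad ℝ h X.1)) + X.2.2 ∘ₗ (LieAlgebra.ad ℝ h Y.1) +
     doubleExtPhi g h B ψ X.2.1 Y.2.1)

/-- The scalar product `μ̃₀((z,x,α),(z',y,β)) = B(x,y) + α(z') + β(z)` of the
double orthogonal extension. -/
def doubleExtForm (g h : Type*) [LieRing g] [LieAlgebra ℝ g]
    [LieRing h] [LieAlgebra ℝ h] (B : LinearMap.BilinForm ℝ g)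
    (X Y : h × g × Module.Dual ℝ h) : ℝ :=
  B X.2.1 Y.2.1 + X.2.2 Y.1 + Y.2.2 X.1

/-!
Jacobi and invariance are checked componentwise on `h × g × h*`. The `h`- and `g`-components are
the Jacobi identities of `h` and of the semidirect product `h ⋉_ψ g`; in the `h*`-component the
`α, β, γ` terms cancel because `π*` is a representation, and the `Φ` terms by a cocycle identity
that comes down to the vanishing of the cyclic sum of `B(D⁅x,y⁆, z)` for a skew derivation `D`.

For the signature, choose a symmetric positive definite isomorphism `e : h ≃ h*`. If `g = N ⊕ P`
with `B` negative on `N` and positive on `P`, the graphs `{(z, n, -e z)}` over `h × N` and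
`{(z, p, e z)}` over `h × P` are complementary and `μ̃₀`-orthogonal, and `μ̃₀` restricts to them
as `B - 2e` and `B + 2e`.
-/

open Module

theorem lie_lie_add_lie_lie_add_lie_lie {L : Type*} [LieRing L] (a b c : L) :
    ⁅⁅a, b⁆, c⁆ + ⁅⁅b, c⁆, a⁆ + ⁅⁅c, a⁆, b⁆ = 0 := by
  rw [← lie_skew ⁅a, b⁆ c, ← lie_skew ⁅b, c⁆ a, ← lie_skew ⁅c, a⁆ b, ← neg_add, ← neg_add,
    neg_eq_zero, ← lie_jacobi c a b]

section InvariantForm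

variable {R L : Type*} [CommRing R] [LieRing L] [LieAlgebra R L] {B : LinearMap.BilinForm R L}

theorem invariantForm_lie_cyclic (hsymm : ∀ x y : L, B x y = B y x)
    (hinv : ∀ x y z : L, B ⁅x, y⁆ z + B y ⁅x, z⁆ = 0) (u v t : L) :
    B ⁅u, v⁆ t = B ⁅v, t⁆ u := by
  have hskew : B t ⁅v, u⁆ = -B t ⁅u, v⁆ := by rw [← lie_skew u v, map_neg, neg_neg]
  linear_combination (-1 : R) * hinv v t u + hskew + hsymm ⁅u, v⁆ t

theorem skewAdjoint_comp_apply (hsymm : ∀ x y : L, B x y = B y x) {D E : Module.End R L}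
    (hD : ∀ x y : L, B (D x) y = -B x (D y)) (hE : ∀ x y : L, B (E x) y = -B x (E y))
    (u v : L) : B (D (E u)) v = B (E (D v)) u := by
  linear_combination hD (E u) v - hE (D v) u + hsymm (D v) (E u)

theorem invariantForm_derivation_cyclic_sum (hsymm : ∀ x y : L, B x y = B y x)
    (hinv : ∀ x y z : L, B ⁅x, y⁆ z + B y ⁅x, z⁆ = 0) {D : Module.End R L}
    (hD : ∀ x y : L, D ⁅x, y⁆ = ⁅D x, y⁆ + ⁅x, D y⁆)
    (hskew : ∀ x y : L, B (D x) y = -B x (D y)) (x y z : L) :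
    B (D ⁅x, y⁆) z + B (D ⁅y, z⁆) x + B (D ⁅z, x⁆) y = 0 := by
  have key : ∀ u v t : L, B ⁅D u, v⁆ t = -B (D ⁅v, t⁆) u := fun u v t => by
    linear_combination invariantForm_lie_cyclic hsymm hinv (D u) v t + hsymm ⁅v, t⁆ (D u)
      + hskew u ⁅v, t⁆ - hsymm u (D ⁅v, t⁆)
  have expand : B (D ⁅x, y⁆) z = B ⁅D x, y⁆ z + B ⁅D y, z⁆ x := by
    rw [hD, map_add, LinearMap.add_apply, invariantForm_lie_cyclic hsymm hinv x (D y) z]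
  linear_combination expand + key x y z + key y z x

end InvariantForm

theorem semidirect_jacobi {R g h : Type*} [CommRing R] [LieRing g] [LieAlgebra R g] [LieRing h]
    [LieAlgebra R h] (ψ : h →ₗ⁅R⁆ Module.End R g)
    (hder : ∀ z : h, ∀ x y : g, ψ z ⁅x, y⁆ = ⁅ψ z x, y⁆ + ⁅x, ψ z y⁆) (a b c : h) (x y z : g) :
    (ψ ⁅a, b⁆ z - ψ c (ψ a y - ψ b x + ⁅x, y⁆) + ⁅ψ a y - ψ b x + ⁅x, y⁆, z⁆) +
      (ψ ⁅b, c⁆ x - ψ a (ψ b z - ψ c y + ⁅y, z⁆) + ⁅ψ b z - ψ c y + ⁅y, z⁆, x⁆) +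
      (ψ ⁅c, a⁆ y - ψ b (ψ c x - ψ a z + ⁅z, x⁆) + ⁅ψ c x - ψ a z + ⁅z, x⁆, y⁆) = 0 := by
  simp only [LieHom.map_lie, Ring.lie_def, LinearMap.sub_apply, Module.End.mul_apply, map_sub,
    map_add, hder, sub_lie, add_lie]
  rw [← lie_skew x (ψ c y), ← lie_skew y (ψ a z), ← lie_skew z (ψ b x)]
  refine Eq.trans ?_ (lie_lie_add_lie_lie_add_lie_lie x y z)
  abel

theorem Module.Basis.toDual_apply_comm {ι R M : Type*} [DecidableEq ι] [CommSemiring R]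
    [AddCommMonoid M] [Module R M] (b : Basis ι R M) (u v : M) :
    b.toDual u v = b.toDual v u := by
  have hflip : b.toDual.flip = b.toDual :=
    b.ext fun i => b.ext fun j => by simp [Basis.toDual_apply, eq_comm]
  exact LinearMap.congr_fun₂ hflip v u

theorem Module.Basis.toDual_apply_self {ι R M : Type*} [DecidableEq ι] [Fintype ι]
    [CommSemiring R] [AddCommMonoid M] [Module R M] (b : Basis ι R M) (u : M) :
    b.toDual u u = ∑ i, b.repr u i * b.repr u i := by
  calc b.toDual u u = b.toDual u (∑ i, b.repr u i • b i) := by rw [b.sum_repr]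
    _ = ∑ i, b.repr u i * b.repr u i := by
      simp only [map_sum, map_smul, Basis.toDual_apply_left, smul_eq_mul]

theorem exists_dualEquiv_comm_pos (V : Type*) [AddCommGroup V] [Module ℝ V]
    [FiniteDimensional ℝ V] :
    ∃ e : V ≃ₗ[ℝ] Dual ℝ V, (∀ u v, e u v = e v u) ∧ ∀ u, u ≠ 0 → 0 < e u u := by
  let b := finBasis ℝ V
  refine ⟨b.toDualEquiv, b.toDual_apply_comm, fun u hu => ?_⟩
  rw [Basis.toDualEquiv_apply, b.toDual_apply_self]
  refine (Finset.sum_nonneg fun i _ => mul_self_nonneg _).lt_of_ne fun h0 => hu ?_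
  refine b.ext_elem fun i => ?_
  simpa using (Finset.sum_eq_zero_iff_of_nonneg fun i _ => mul_self_nonneg (b.repr u i)).1
    h0.symm i (Finset.mem_univ i)

section GraphEmbedding

open LinearMap

variable {g h : Type*} [AddCommGroup g] [Module ℝ g] [AddCommGroup h] [Module ℝ h]

def graphEmbedding (e : h →ₗ[ℝ] Dual ℝ h) (c : ℝ) (S : Submodule ℝ g) :
    h × S →ₗ[ℝ] h × g × Dual ℝ h :=
  (fst ℝ h S).prod ((S.subtype ∘ₗ snd ℝ h S).prod ((c • e) ∘ₗ fst ℝ h S))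

@[simp]
theorem graphEmbedding_apply (e : h →ₗ[ℝ] Dual ℝ h) (c : ℝ) (S : Submodule ℝ g) (u : h × S) :
    graphEmbedding e c S u = (u.1, (u.2 : g), c • e u.1) :=
  rfl

theorem graphEmbedding_injective (e : h →ₗ[ℝ] Dual ℝ h) (c : ℝ) (S : Submodule ℝ g) :
    Function.Injective (graphEmbedding e c S) := fun u v huv => by
  simp only [graphEmbedding_apply, Prod.mk.injEq] at huv
  exact Prod.ext huv.1 (Subtype.ext huv.2.1)

theorem finrank_range_graphEmbedding [FiniteDimensional ℝ g] [FiniteDimensional ℝ h]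
    (e : h →ₗ[ℝ] Dual ℝ h) (c : ℝ) (S : Submodule ℝ g) :
    finrank ℝ (range (graphEmbedding e c S)) = finrank ℝ S + finrank ℝ h := by
  rw [finrank_range_of_inj (graphEmbedding_injective e c S), finrank_prod, add_comm]

theorem isCompl_range_graphEmbedding (e : h ≃ₗ[ℝ] Dual ℝ h) {N P : Submodule ℝ g}
    (hNP : IsCompl N P) :
    IsCompl (range (graphEmbedding (e : h →ₗ[ℝ] Dual ℝ h) (-1) N))
      (range (graphEmbedding (e : h →ₗ[ℝ] Dual ℝ h) 1 P)) := by
  constructor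
  · rw [Submodule.disjoint_def]
    rintro _ ⟨⟨z, n⟩, rfl⟩ ⟨⟨w, p⟩, hwp⟩
    simp only [graphEmbedding_apply, Prod.mk.injEq, one_smul] at hwp
    obtain ⟨rfl, hpn, hez⟩ := hwp
    have hz : w = 0 := e.map_eq_zero_iff.1 <| by
      linear_combination (norm := module) (2⁻¹ : ℝ) • hez
    have hn : (n : g) = 0 := by
      have hmem : (n : g) ∈ N ⊓ P := ⟨n.2, hpn ▸ p.2⟩
      rwa [hNP.inf_eq_bot, Submodule.mem_bot] at hmem
    simp [hz, hn]
  · rw [codisjoint_iff, eq_top_iff]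
    rintro ⟨z, x, α⟩ -
    obtain ⟨n, hn, p, hp, rfl⟩ :=
      Submodule.mem_sup.1 (hNP.sup_eq_top ▸ Submodule.mem_top (x := x))
    obtain ⟨w, rfl⟩ := e.surjective α
    refine Submodule.mem_sup.2 ⟨_, ⟨((2⁻¹ : ℝ) • (z - w), ⟨n, hn⟩), rfl⟩,
      _, ⟨((2⁻¹ : ℝ) • (z + w), ⟨p, hp⟩), rfl⟩, ?_⟩
    simp only [graphEmbedding_apply, LinearEquiv.coe_coe, map_smul, map_sub, map_add,
      Prod.mk_add_mk, Prod.mk.injEq]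
    exact ⟨by module, trivial, by module⟩

end GraphEmbedding

section DoubleExtension

variable {g h : Type*} [LieRing g] [LieAlgebra ℝ g] [LieRing h] [LieAlgebra ℝ h]
  {B : LinearMap.BilinForm ℝ g}

@[simp]
theorem doubleExtPhi_apply (ψ : h →ₗ⁅ℝ⁆ Module.End ℝ g) (x y : g) (w : h) :
    doubleExtPhi g h B ψ x y w = B (ψ w x) y :=
  rfl

theorem doubleExtPhi_cocycle (hsymm : ∀ x y : g, B x y = B y x)
    (hinv : ∀ x y z : g, B ⁅x, y⁆ z + B y ⁅x, z⁆ = 0) (ψ : h →ₗ⁅ℝ⁆ Module.End ℝ g)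
    (hder : ∀ z : h, ∀ x y : g, ψ z ⁅x, y⁆ = ⁅ψ z x, y⁆ + ⁅x, ψ z y⁆)
    (hskew : ∀ z : h, ∀ x y : g, B (ψ z x) y = -B x (ψ z y)) (a b c w : h) (x y z : g) :
    let Φ := doubleExtPhi g h B ψ
    Φ x y ⁅c, w⁆ + Φ (ψ a y - ψ b x + ⁅x, y⁆) z w +
      (Φ y z ⁅a, w⁆ + Φ (ψ b z - ψ c y + ⁅y, z⁆) x w) +
      (Φ z x ⁅b, w⁆ + Φ (ψ c x - ψ a z + ⁅z, x⁆) y w) = 0 := by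
  intro Φ
  have swap : ∀ d u v, B (ψ d (ψ w u)) v = B (ψ w (ψ d v)) u := fun d =>
    skewAdjoint_comp_apply hsymm (hskew d) (hskew w)
  simp only [Φ, doubleExtPhi_apply, LieHom.map_lie, Ring.lie_def, LinearMap.sub_apply,
    Module.End.mul_apply, map_sub, map_add, LinearMap.add_apply]
  linear_combination invariantForm_derivation_cyclic_sum hsymm hinv (hder w) (hskew w) x y z
    + swap c x y + swap a y z + swap b z x

theorem doubleExtBracket_jacobi (hsymm : ∀ x y : g, B x y = B y x)
    (hinv : ∀ x y z : g, B ⁅x, y⁆ z + B y ⁅x, z⁆ = 0) (ψ : h →ₗ⁅ℝ⁆ Module.End ℝ g)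
    (hder : ∀ z : h, ∀ x y : g, ψ z ⁅x, y⁆ = ⁅ψ z x, y⁆ + ⁅x, ψ z y⁆)
    (hskew : ∀ z : h, ∀ x y : g, B (ψ z x) y = -B x (ψ z y))
    (X Y Z : h × g × Dual ℝ h) :
    doubleExtBracket g h B ψ (doubleExtBracket g h B ψ X Y) Z +
      doubleExtBracket g h B ψ (doubleExtBracket g h B ψ Y Z) X +
      doubleExtBracket g h B ψ (doubleExtBracket g h B ψ Z X) Y = 0 := by
  obtain ⟨a, x, α⟩ := X
  obtain ⟨b, y, β⟩ := Y
  obtain ⟨c, z, γ⟩ := Z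
  refine Prod.ext (lie_lie_add_lie_lie_add_lie_lie a b c)
    (Prod.ext (semidirect_jacobi ψ hder a b c x y z) ?_)
  ext w
  have coadjoint : ∀ (φ : Dual ℝ h) (u v : h),
      φ ⁅⁅u, v⁆, w⁆ = φ ⁅u, ⁅v, w⁆⁆ - φ ⁅v, ⁅u, w⁆⁆ := fun φ u v => by rw [lie_lie, map_sub]
  simp only [doubleExtBracket, Prod.snd_add, LinearMap.add_apply, LinearMap.neg_apply,
    LinearMap.comp_apply, LieAlgebra.ad_apply, LinearMap.add_comp, LinearMap.neg_comp,
    LinearMap.zero_apply, Prod.snd_zero]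
  linear_combination doubleExtPhi_cocycle hsymm hinv ψ hder hskew a b c w x y z
    - coadjoint α b c - coadjoint β c a - coadjoint γ a b

theorem doubleExtForm_comm (hsymm : ∀ x y : g, B x y = B y x) (X Y : h × g × Dual ℝ h) :
    doubleExtForm g h B X Y = doubleExtForm g h B Y X := by
  simp only [doubleExtForm, hsymm X.2.1]
  ring

theorem eq_zero_of_forall_doubleExtForm_eq_zero (hB : B.Nondegenerate)
    (X : h × g × Dual ℝ h) (hX : ∀ Y, doubleExtForm g h B X Y = 0) : X = 0 := by
  obtain ⟨a, x, α⟩ := X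
  have hx : x = 0 := hB.1 x fun y => by simpa [doubleExtForm] using hX (0, y, 0)
  have hα : α = 0 := LinearMap.ext fun b => by simpa [doubleExtForm] using hX (b, 0, 0)
  have ha : a = 0 := (forall_dual_apply_eq_zero_iff ℝ a).1 fun φ => by
    simpa [doubleExtForm] using hX (0, 0, φ)
  simp [hx, hα, ha]

theorem doubleExtForm_invariant (hsymm : ∀ x y : g, B x y = B y x)
    (hinv : ∀ x y z : g, B ⁅x, y⁆ z + B y ⁅x, z⁆ = 0) (ψ : h →ₗ⁅ℝ⁆ Module.End ℝ g)
    (hskew : ∀ z : h, ∀ x y : g, B (ψ z x) y = -B x (ψ z y))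
    (X Y Z : h × g × Dual ℝ h) :
    doubleExtForm g h B (doubleExtBracket g h B ψ X Y) Z +
      doubleExtForm g h B Y (doubleExtBracket g h B ψ X Z) = 0 := by
  obtain ⟨a, x, α⟩ := X
  obtain ⟨b, y, β⟩ := Y
  obtain ⟨c, z, γ⟩ := Z
  have hα : α ⁅c, b⁆ = -α ⁅b, c⁆ := by rw [← lie_skew b c, map_neg, neg_neg]
  simp only [doubleExtForm, doubleExtBracket, doubleExtPhi_apply, LinearMap.add_apply,
    LinearMap.neg_apply, LinearMap.comp_apply, LieAlgebra.ad_apply, map_sub, map_add,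
    LinearMap.sub_apply]
  linear_combination hinv x y z + hskew a y z + hα + hsymm (ψ c x) y

theorem doubleExtForm_graphEmbedding {e : h →ₗ[ℝ] Dual ℝ h} (he : ∀ u v, e u v = e v u)
    (c c' : ℝ) {S S' : Submodule ℝ g} (u : h × S) (v : h × S') :
    doubleExtForm g h B (graphEmbedding e c S u) (graphEmbedding e c' S' v) =
      B u.2 v.2 + (c + c') * e u.1 v.1 := by
  simp only [doubleExtForm, graphEmbedding_apply, LinearMap.smul_apply, smul_eq_mul, he v.1]
  ring

theorem mul_doubleExtForm_graphEmbedding_self_pos {e : h →ₗ[ℝ] Dual ℝ h}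
    (he : ∀ u v, e u v = e v u) (he_pos : ∀ u, u ≠ 0 → 0 < e u u) {σ : ℝ} (hσ : σ ≠ 0)
    {S : Submodule ℝ g} (hS : ∀ x ∈ S, x ≠ 0 → 0 < σ * B x x) {u : h × S} (hu : u ≠ 0) :
    0 < σ * doubleExtForm g h B (graphEmbedding e σ S u) (graphEmbedding e σ S u) := by
  rw [doubleExtForm_graphEmbedding he]
  rcases eq_or_ne u.1 0 with hz | hz
  · have hs : (u.2 : g) ≠ 0 := fun hs => hu (Prod.ext hz (Subtype.ext hs))
    simpa [hz] using hS _ u.2.2 hs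
  · have hs : 0 ≤ σ * B u.2 u.2 := by
      rcases eq_or_ne (u.2 : g) 0 with hs | hs
      · simp [hs]
      · exact (hS _ u.2.2 hs).le
    nlinarith [he_pos _ hz, mul_self_pos.2 hσ]

theorem hasSignature_doubleExtForm [FiniteDimensional ℝ g] [FiniteDimensional ℝ h] {p q : ℕ}
    (hpq : HasSignature (fun x y : g => B x y) p q) :
    HasSignature (doubleExtForm g h B) (p + finrank ℝ h) (q + finrank ℝ h) := by
  obtain ⟨N, P, rfl, rfl, hNP, horth, hneg, hpos⟩ := hpq
  obtain ⟨e, he, he_pos⟩ := exists_dualEquiv_comm_pos h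
  have ne_zero {σ : ℝ} {S : Submodule ℝ g} {u : h × S}
      (hu : graphEmbedding (e : h →ₗ[ℝ] Dual ℝ h) σ S u ≠ 0) : u ≠ 0 := by
    rintro rfl; exact hu (map_zero _)
  refine ⟨_, _, finrank_range_graphEmbedding _ (-1) N, finrank_range_graphEmbedding _ 1 P,
    isCompl_range_graphEmbedding e hNP, ?_, ?_, ?_⟩
  · rintro _ ⟨u, rfl⟩ _ ⟨v, rfl⟩
    rw [doubleExtForm_graphEmbedding he]
    simp [horth _ u.2.2 _ v.2.2]
  · rintro _ ⟨u, rfl⟩ hu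
    have := mul_doubleExtForm_graphEmbedding_self_pos (B := B) he he_pos
      (neg_ne_zero.2 one_ne_zero) (fun x hx hx0 => by linarith [hneg x hx hx0]) (ne_zero hu)
    linarith
  · rintro _ ⟨u, rfl⟩ hu
    simpa using mul_doubleExtForm_graphEmbedding_self_pos (B := B) he he_pos one_ne_zero
      (fun x hx hx0 => by simpa using hpos x hx hx0) (ne_zero hu)

end DoubleExtension

/-- **Medina–Revoy double orthogonal extension.** Given an orthogonal Lie algebra
`(g,B)`, a Lie algebra `h`, and a homomorphism `ψ : h → End(g)` by skew-adjoint
derivations, the bracket on `g̃ = h × g × h*` satisfies the Jacobi identity and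
the form `μ̃₀` is symmetric, nondegenerate, and invariant; moreover if `B` has
signature `(p,q)` then `μ̃₀` has signature `(p + dim h, q + dim h)`. -/
theorem double_orthogonal_extension
    (g : Type*) [LieRing g] [LieAlgebra ℝ g] [FiniteDimensional ℝ g]
    (h : Type*) [LieRing h] [LieAlgebra ℝ h] [FiniteDimensional ℝ h]
    (B : LinearMap.BilinForm ℝ g) (hB : B.Nondegenerate)
    (hsymm : ∀ x y : g, B x y = B y x)
    (hinv : ∀ x y z : g, B ⁅x, y⁆ z + B y ⁅x, z⁆ = 0)
    (ψ : h →ₗ⁅ℝ⁆ Module.End ℝ g)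
    (hder : ∀ z : h, ∀ x y : g, ψ z ⁅x, y⁆ = ⁅ψ z x, y⁆ + ⁅x, ψ z y⁆)
    (hskew : ∀ z : h, ∀ x y : g, B (ψ z x) y = -B x (ψ z y)) :
    (∀ X Y Z : h × g × Module.Dual ℝ h,
        doubleExtBracket g h B ψ (doubleExtBracket g h B ψ X Y) Z +
          doubleExtBracket g h B ψ (doubleExtBracket g h B ψ Y Z) X +
          doubleExtBracket g h B ψ (doubleExtBracket g h B ψ Z X) Y = 0) ∧
    (∀ X Y : h × g × Module.Dual ℝ h,
        doubleExtForm g h B X Y = doubleExtForm g h B Y X) ∧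
    (∀ X : h × g × Module.Dual ℝ h,
        (∀ Y, doubleExtForm g h B X Y = 0) → X = 0) ∧
    (∀ X Y Z : h × g × Module.Dual ℝ h,
        doubleExtForm g h B (doubleExtBracket g h B ψ X Y) Z +
          doubleExtForm g h B Y (doubleExtBracket g h B ψ X Z) = 0) ∧
    (∀ p q : ℕ, HasSignature (fun x y : g => B x y) p q →
        HasSignature (doubleExtForm g h B)
          (p + Module.finrank ℝ h) (q + Module.finrank ℝ h)) :=
  ⟨doubleExtBracket_jacobi hsymm hinv ψ hder hskew, doubleExtForm_comm hsymm,
    eq_zero_of_forall_doubleExtForm_eq_zero hB, doubleExtForm_invariant hsymm hinv ψ hskew,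
    fun _ _ => hasSignature_doubleExtForm⟩
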